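/- Let x, y ∈ Δ_d↓ with x ⪰ y and ε > 0. Then the majorization-minimum of B^∞_ε(x) majorizes the majorization-minimum of B^∞_ε(y): min B^∞_ε(x) ⪰ min B^∞_ε(y). -/
import Mathlib


open Finset

/-- Partial sum of the first `k` components of `x`. -/
def psum (d : ℕ) (x : Fin d → ℝ) (k : ℕ) : ℝ :=
  ∑ i ∈ Finset.univ.filter (fun i : Fin d => (i : ℕ) < k), x i

/-- The ordered probability simplex `Δ_d↓`. -/
def Simplex (d : ℕ) (x : Fin d → ℝ) : Prop :=
  (∀ i j : Fin d, i ≤ j → x j ≤ x i) ∧ (∀ i, 0 ≤ x i) ∧ ∑ i, x i = 1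

/-- Majorization: all partial sums of `x` dominate those of `y`. -/
def Maj (d : ℕ) (x y : Fin d → ℝ) : Prop :=
  ∀ k : ℕ, psum d y k ≤ psum d x k

/-- ℓ∞ distance. -/
noncomputable def dInf (d : ℕ) (x y : Fin d → ℝ) : ℝ := ⨆ i, |x i - y i|

/-- ℓ¹ distance. -/
def dOne (d : ℕ) (x y : Fin d → ℝ) : ℝ := ∑ i, |x i - y i|

lemma card_mid (d a b : ℕ) (hb : b ≤ d) :
    (univ.filter fun i : Fin d => a ≤ (i : ℕ) ∧ (i : ℕ) < b).card = b - a := by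
  rw [← Nat.card_Ico a b]
  apply Finset.card_bij (fun (i : Fin d) _ => (i : ℕ))
  · intro i hi
    simp only [mem_filter] at hi
    simp [Finset.mem_Ico, hi.2.1, hi.2.2]
  · intro i _ j _ h; exact Fin.ext h
  · intro n hn
    simp only [Finset.mem_Ico] at hn
    exact ⟨⟨n, lt_of_lt_of_le hn.2 hb⟩, by simp [hn.1, hn.2], rfl⟩

lemma psum_split (d : ℕ) (v : Fin d → ℝ) (a k : ℕ) (hak : a ≤ k) :
    psum d v k = psum d v a + ∑ i ∈ univ.filter fun i : Fin d => a ≤ (i : ℕ) ∧ (i : ℕ) < k, v i := by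
  unfold psum
  rw [← Finset.sum_filter_add_sum_filter_not (univ.filter fun i : Fin d => (i : ℕ) < k)
    (fun i : Fin d => (i : ℕ) < a)]
  congr 1
  · congr 1
    rw [Finset.filter_filter]
    apply Finset.filter_congr
    intro i _
    constructor
    · rintro ⟨_, h2⟩; exact h2
    · intro h; exact ⟨lt_of_lt_of_le h hak, h⟩
  · congr 1
    rw [Finset.filter_filter]
    apply Finset.filter_congr
    intro i _
    simp only [not_lt]
    tauto

lemma psum_d (d : ℕ) (v : Fin d → ℝ) : psum d v d = ∑ i, v i := by
  unfold psum
  rw [Finset.filter_true_of_mem]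
  intro i _; exact i.isLt

lemma psum_ge (d : ℕ) (v : Fin d → ℝ) (k : ℕ) (h : d ≤ k) : psum d v k = ∑ i, v i := by
  unfold psum
  rw [Finset.filter_true_of_mem]
  intro i _; exact lt_of_lt_of_le i.isLt h

lemma card_lt (d k : ℕ) (hk : k ≤ d) :
    (univ.filter fun i : Fin d => (i : ℕ) < k).card = k := by
  have := card_mid d 0 k hk
  simpa using this

/-- The key inequality: the clamped vector at level `lam` (the "flattest" vector in the
ε-ball around `y`) has partial sums dominated by those of any sorted `mx` lying within
ε of `x`, provided `x` majorizes `y`. -/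
lemma key_ineq (d : ℕ) (x y mx : Fin d → ℝ) (ε lam : ℝ) (hε : 0 < ε)
    (hy_sorted : ∀ i j : Fin d, i ≤ j → y j ≤ y i)
    (hmx_sorted : ∀ i j : Fin d, i ≤ j → mx j ≤ mx i)
    (hmx_sum : ∑ i, mx i = 1)
    (hclose : ∀ i, |mx i - x i| ≤ ε)
    (hx_sum : ∑ i, x i = 1)
    (hy_sum : ∑ i, y i = 1)
    (hxy : ∀ k, psum d y k ≤ psum d x k)
    (hwsum : ∑ i, max (y i - ε) (min (y i + ε) lam) = 1)
    (k : ℕ) :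
    psum d (fun i => max (y i - ε) (min (y i + ε) lam)) k ≤ psum d mx k := by
  set w : Fin d → ℝ := fun i => max (y i - ε) (min (y i + ε) lam) with hwdef
  have hwi : ∀ i : Fin d, w i = max (y i - ε) (min (y i + ε) lam) := fun i => by rw [hwdef]
  -- reduce to k ≤ d
  rcases le_or_gt k d with hk | hk
  swap
  · rw [psum_ge d w k hk.le, psum_ge d mx k hk.le, hwsum, hmx_sum]
  -- generic lemma A : if w = y - ε below a, then psum w a ≤ psum mx a
  have hA : ∀ a : ℕ, a ≤ d → (∀ i : Fin d, (i : ℕ) < a → w i = y i - ε) →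
      psum d w a ≤ psum d mx a := by
    intro a ha hlow
    have h1 : psum d w a = psum d y a - a * ε := by
      unfold psum
      rw [Finset.sum_congr rfl (fun i hi => hlow i (mem_filter.mp hi).2),
        Finset.sum_sub_distrib, Finset.sum_const, card_lt d a ha, nsmul_eq_mul]
    have h2 : psum d x a - a * ε ≤ psum d mx a := by
      unfold psum
      have h3 : ∑ i ∈ univ.filter (fun i : Fin d => (i : ℕ) < a), (x i - ε) ≤
          ∑ i ∈ univ.filter (fun i : Fin d => (i : ℕ) < a), mx i :=
        Finset.sum_le_sum fun i _ => by linarith [(abs_le.mp (hclose i)).1]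
      rw [Finset.sum_sub_distrib, Finset.sum_const, card_lt d a ha, nsmul_eq_mul] at h3
      exact h3
    have h4 := hxy a
    linarith
  -- generic lemma B : if w = y + ε from b on, then psum w b ≤ psum mx b
  have hB : ∀ b : ℕ, b ≤ d → (∀ i : Fin d, b ≤ (i : ℕ) → w i = y i + ε) →
      psum d w b ≤ psum d mx b := by
    intro b hb hhigh
    have hsw := psum_split d w b d hb
    have hsmx := psum_split d mx b d hb
    have hsx := psum_split d x b d hb
    have hsy := psum_split d y b d hb
    rw [psum_d, hwsum] at hsw
    rw [psum_d, hmx_sum] at hsmx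
    rw [psum_d, hx_sum] at hsx
    rw [psum_d, hy_sum] at hsy
    have hmw : ∑ i ∈ univ.filter (fun i : Fin d => b ≤ (i : ℕ) ∧ (i : ℕ) < d), w i =
        (∑ i ∈ univ.filter (fun i : Fin d => b ≤ (i : ℕ) ∧ (i : ℕ) < d), y i) + (d - b : ℕ) * ε := by
      rw [Finset.sum_congr rfl (fun i hi => hhigh i (mem_filter.mp hi).2.1),
        Finset.sum_add_distrib, Finset.sum_const, card_mid d b d le_rfl, nsmul_eq_mul]
    have hmmx : ∑ i ∈ univ.filter (fun i : Fin d => b ≤ (i : ℕ) ∧ (i : ℕ) < d), mx i ≤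
        (∑ i ∈ univ.filter (fun i : Fin d => b ≤ (i : ℕ) ∧ (i : ℕ) < d), x i) + (d - b : ℕ) * ε := by
      have h3 : ∑ i ∈ univ.filter (fun i : Fin d => b ≤ (i : ℕ) ∧ (i : ℕ) < d), mx i ≤
          ∑ i ∈ univ.filter (fun i : Fin d => b ≤ (i : ℕ) ∧ (i : ℕ) < d), (x i + ε) :=
        Finset.sum_le_sum fun i _ => by linarith [(abs_le.mp (hclose i)).2]
      rw [Finset.sum_add_distrib, Finset.sum_const, card_mid d b d le_rfl, nsmul_eq_mul] at h3
      exact h3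
    have h4 := hxy b
    linarith
  -- case 1 : all entries below k are clipped down
  by_cases hC1 : ∀ i : Fin d, (i : ℕ) < k → lam ≤ y i - ε
  · exact hA k hk fun i hi =>
      max_eq_left ((min_le_right _ _).trans (hC1 i hi))
  push_neg at hC1
  obtain ⟨i0, hi0k, hi0⟩ := hC1
  -- case 2 : all entries from k on are clipped up
  by_cases hC2 : ∀ i : Fin d, k ≤ (i : ℕ) → y i + ε ≤ lam
  · exact hB k hk fun i hi => by
      rw [hwi i, min_eq_left (hC2 i hi)]
      exact max_eq_right (by linarith)
  push_neg at hC2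
  obtain ⟨j, hjk, hj⟩ := hC2
  -- middle case
  have hane : (univ.filter fun i : Fin d => y i - ε < lam).Nonempty := ⟨i0, by simp [hi0]⟩
  set a' : Fin d := (univ.filter fun i : Fin d => y i - ε < lam).min' hane with ha'def
  have ha'mem : y a' - ε < lam := by
    have := Finset.min'_mem _ hane
    simp only [mem_filter] at this
    exact this.2
  have ha'min : ∀ i : Fin d, y i - ε < lam → a' ≤ i := fun i hi =>
    Finset.min'_le _ _ (by simp [hi])
  set a : ℕ := (a' : ℕ) with hadef
  have hak : a < k := lt_of_le_of_lt (Fin.le_def.mp (ha'min i0 hi0)) hi0k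
  have hlow : ∀ i : Fin d, (i : ℕ) < a → w i = y i - ε := by
    intro i hi
    have h1 : lam ≤ y i - ε := by
      by_contra h
      push_neg at h
      exact absurd (Fin.le_def.mp (ha'min i h)) (by omega)
    rw [hwi i]
    exact max_eq_left ((min_le_right _ _).trans h1)
  have hmidlow : ∀ i : Fin d, a ≤ (i : ℕ) → y i - ε < lam := by
    intro i hi
    have := hy_sorted a' i (Fin.le_def.mpr hi)
    linarith
  obtain ⟨b, hbd, hkb, hmidb, htailb⟩ :
      ∃ b : ℕ, b ≤ d ∧ k < b ∧ (∀ i : Fin d, (i : ℕ) < b → lam ≤ y i + ε) ∧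
        (∀ i : Fin d, b ≤ (i : ℕ) → w i = y i + ε) := by
    by_cases hS : (univ.filter fun i : Fin d => y i + ε < lam).Nonempty
    · set b' : Fin d := (univ.filter fun i : Fin d => y i + ε < lam).min' hS with hb'def
      have hb'mem : y b' + ε < lam := by
        have := Finset.min'_mem _ hS
        simp only [mem_filter] at this
        exact this.2
      have hb'min : ∀ i : Fin d, y i + ε < lam → b' ≤ i := fun i hi =>
        Finset.min'_le _ _ (by simp [hi])
      refine ⟨(b' : ℕ), b'.isLt.le, ?_, ?_, ?_⟩
      · by_contra h
        push_neg at h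
        have hjb : b' ≤ j := Fin.le_def.mpr (le_trans h hjk)
        have := hy_sorted b' j hjb
        linarith
      · intro i hi
        by_contra h
        push_neg at h
        exact absurd (Fin.le_def.mp (hb'min i h)) (by omega)
      · intro i hi
        have h1 : y i + ε ≤ lam := by
          have := hy_sorted b' i (Fin.le_def.mpr hi)
          linarith
        rw [hwi i, min_eq_left h1]
        exact max_eq_right (by linarith)
    · refine ⟨d, le_rfl, lt_of_le_of_lt hjk j.isLt, ?_, ?_⟩
      · intro i _
        by_contra h
        push_neg at h
        exact hS ⟨i, by simp [h]⟩
      · intro i hi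
        exact absurd i.isLt (by omega)
  have hkd : k < d := lt_of_lt_of_le hkb hbd
  have hmid : ∀ i : Fin d, a ≤ (i : ℕ) → (i : ℕ) < b → w i = lam := by
    intro i h1 h2
    rw [hwi i, min_eq_right (hmidb i h2)]
    exact max_eq_right (le_of_lt (hmidlow i h1))
  have hak' : a ≤ k := hak.le
  have hkb' : k ≤ b := hkb.le
  set μ : ℝ := mx ⟨k, hkd⟩ with hμdef
  have hWk : psum d w k = psum d w a + ((k - a : ℕ) : ℝ) * lam := by
    rw [psum_split d w a k hak']
    congr 1
    rw [Finset.sum_congr rfl (fun i hi => hmid i (mem_filter.mp hi).2.1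
      (lt_of_lt_of_le (mem_filter.mp hi).2.2 hkb')),
      Finset.sum_const, card_mid d a k hk, nsmul_eq_mul]
  have hWb : psum d w b = psum d w k + ((b - k : ℕ) : ℝ) * lam := by
    rw [psum_split d w k b hkb']
    congr 1
    rw [Finset.sum_congr rfl (fun i hi => hmid i
      (le_trans hak' (mem_filter.mp hi).2.1) (mem_filter.mp hi).2.2),
      Finset.sum_const, card_mid d k b hbd, nsmul_eq_mul]
  have hKa : psum d mx a + ((k - a : ℕ) : ℝ) * μ ≤ psum d mx k := by
    rw [psum_split d mx a k hak']
    have h5 : ∑ _i ∈ univ.filter (fun i : Fin d => a ≤ (i : ℕ) ∧ (i : ℕ) < k), μ ≤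
        ∑ i ∈ univ.filter (fun i : Fin d => a ≤ (i : ℕ) ∧ (i : ℕ) < k), mx i :=
      Finset.sum_le_sum fun i hi =>
        hmx_sorted i ⟨k, hkd⟩ (Fin.le_def.mpr (le_of_lt (mem_filter.mp hi).2.2))
    rw [Finset.sum_const, card_mid d a k hk, nsmul_eq_mul] at h5
    linarith
  have hKb : psum d mx b ≤ psum d mx k + ((b - k : ℕ) : ℝ) * μ := by
    rw [psum_split d mx k b hkb']
    have h5 : ∑ i ∈ univ.filter (fun i : Fin d => k ≤ (i : ℕ) ∧ (i : ℕ) < b), mx i ≤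
        ∑ _i ∈ univ.filter (fun i : Fin d => k ≤ (i : ℕ) ∧ (i : ℕ) < b), μ :=
      Finset.sum_le_sum fun i hi =>
        hmx_sorted ⟨k, hkd⟩ i (Fin.le_def.mpr (mem_filter.mp hi).2.1)
    rw [Finset.sum_const, card_mid d k b hbd, nsmul_eq_mul] at h5
    linarith
  have hWa' : psum d w a ≤ psum d mx a := hA a (le_of_lt (lt_of_lt_of_le hak hk)) hlow
  have hWb' : psum d w b ≤ psum d mx b := hB b hbd htailb
  set p : ℝ := ((k - a : ℕ) : ℝ) with hpdef
  set q : ℝ := ((b - k : ℕ) : ℝ) with hqdef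
  have hp : 0 ≤ p := Nat.cast_nonneg _
  have hq : 0 < q := by
    rw [hqdef]
    exact_mod_cast Nat.sub_pos_of_lt hkb
  have c1 : psum d w a + p * μ ≤ psum d mx k := by linarith
  have c2 : psum d w b - q * μ ≤ psum d mx k := by linarith
  have e1 : q * (psum d w a + p * μ) ≤ q * psum d mx k :=
    mul_le_mul_of_nonneg_left c1 hq.le
  have e2 : p * (psum d w b - q * μ) ≤ p * psum d mx k :=
    mul_le_mul_of_nonneg_left c2 hp
  have e3 : q * psum d w a + p * psum d w b = (p + q) * psum d w k := by
    linear_combination (-q) * hWk + p * hWb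
  have e4 : (p + q) * psum d w k ≤ (p + q) * psum d mx k := by nlinarith [e1, e2, e3]
  exact le_of_mul_le_mul_left e4 (by linarith)

theorem min_of_ball_preserves_majorization (d : ℕ) (hd : 0 < d)
    (x y : Fin d → ℝ) (hx : Simplex d x) (hy : Simplex d y)
    (ε : ℝ) (hε : 0 < ε) (hmaj : Maj d x y) (mx my : Fin d → ℝ)
    (hmx_mem : Simplex d mx ∧ dInf d mx x ≤ ε)
    (hmx_min : ∀ z : Fin d → ℝ, Simplex d z → dInf d z x ≤ ε → Maj d z mx)
    (hmy_mem : Simplex d my ∧ dInf d my y ≤ ε)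
    (hmy_min : ∀ z : Fin d → ℝ, Simplex d z → dInf d z y ≤ ε → Maj d z my) :
    Maj d mx my := by
  obtain ⟨hmx_s, hmx_d⟩ := hmx_mem
  have hne : Nonempty (Fin d) := ⟨⟨0, hd⟩⟩
  have hclose : ∀ i, |mx i - x i| ≤ ε := by
    unfold dInf at hmx_d
    intro i
    exact le_trans (le_ciSup (f := fun j => |mx j - x j|) (Set.Finite.bddAbove (Set.finite_range _)) i) hmx_d
  -- find the level lam by the intermediate value theorem
  have hcont : Continuous (fun t : ℝ => ∑ i, max (y i - ε) (min (y i + ε) t)) := by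
    apply continuous_finset_sum
    intro i _
    exact continuous_const.max (continuous_const.min continuous_id)
  have h01 : (0 : ℝ) ≤ 1 + ε := by linarith
  have hsub := intermediate_value_Icc h01 hcont.continuousOn
  have hf0 : ∑ i, max (y i - ε) (min (y i + ε) (0 : ℝ)) ≤ 1 := by
    calc ∑ i, max (y i - ε) (min (y i + ε) (0 : ℝ)) ≤ ∑ i, y i := by
          apply Finset.sum_le_sum
          intro i _
          have h1 := hy.2.1 i
          exact max_le (by linarith) ((min_le_right _ _).trans h1)
      _ = 1 := hy.2.2
  have hf1 : 1 ≤ ∑ i, max (y i - ε) (min (y i + ε) (1 + ε)) := by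
    have hcalc : ∑ i, max (y i - ε) (min (y i + ε) (1 + ε)) = 1 + (d : ℝ) * ε := by
      have : ∀ i : Fin d, max (y i - ε) (min (y i + ε) (1 + ε)) = y i + ε := by
        intro i
        have hle : y i ≤ 1 := by
          rw [← hy.2.2]
          exact Finset.single_le_sum (fun j _ => hy.2.1 j) (mem_univ i)
        rw [min_eq_left (by linarith)]
        exact max_eq_right (by linarith)
      rw [Finset.sum_congr rfl (fun i _ => this i), Finset.sum_add_distrib, hy.2.2,
        Finset.sum_const, card_univ, Fintype.card_fin, nsmul_eq_mul]
    have hd1 : (1 : ℝ) ≤ (d : ℝ) := by exact_mod_cast hd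
    nlinarith
  obtain ⟨lam, hlamIcc, hflam⟩ := hsub ⟨hf0, hf1⟩
  have hlam0 : 0 ≤ lam := hlamIcc.1
  set w : Fin d → ℝ := fun i => max (y i - ε) (min (y i + ε) lam) with hwdef
  have hwsum : ∑ i, w i = 1 := hflam
  have hSw : Simplex d w := by
    refine ⟨?_, ?_, hwsum⟩
    · intro i j hij
      have := hy.1 i j hij
      exact max_le_max (by linarith) (min_le_min (by linarith) le_rfl)
    · intro i
      have h1 := hy.2.1 i
      exact le_trans (le_min (by linarith) hlam0) (le_max_right _ _)
  have hdw : dInf d w y ≤ ε := by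
    unfold dInf
    apply ciSup_le
    intro i
    have hlo : y i - ε ≤ w i := le_max_left _ _
    have hhi : w i ≤ y i + ε := max_le (by linarith) (min_le_left _ _)
    rw [abs_le]
    constructor <;> [linarith; linarith]
  intro k
  have h1 := hmy_min w hSw hdw k
  have h2 := key_ineq d x y mx ε lam hε hy.1 hmx_s.1 hmx_s.2.2 hclose hx.2.2 hy.2.2
    hmaj hwsum k
  exact le_trans h1 h2
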